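/- Dimension reduction identity for diagonal Hermite kernels: for all k ≥ 2 and d ≥ 3 and x ∈ ℝ^d, 𝓗_{k,d}(x,x) − 𝓗_{k−2,d}(x,x) = π^{−1} 𝓗_{k,d−2}(x',x'), where x' ∈ ℝ^{d−2} is any point with |x'| = |x| (the diagonal kernel 𝓗_{k,d}(x,x) depends on x only through |x|). -/

import Mathlib

open Real MeasureTheory Finset

/-- The physicists' Hermite polynomial `H_n(t) = (-1)^n e^{t^2} (d/dt)^n e^{-t^2}`. -/
noncomputable def hermiteH (n : ℕ) (t : ℝ) : ℝ :=
  (-1 : ℝ) ^ n * Real.exp (t ^ 2) * iteratedDeriv n (fun s => Real.exp (-s ^ 2)) t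

/-- The `L^2`-normalized Hermite function `h_n(t) = (2^n n! √π)^{-1/2} H_n(t) e^{-t^2/2}`. -/
noncomputable def hermiteh (n : ℕ) (t : ℝ) : ℝ :=
  (Real.sqrt (2 ^ n * n.factorial * Real.sqrt Real.pi))⁻¹ * hermiteH n t * Real.exp (-t ^ 2 / 2)

/-- The `d`-dimensional Hermite function `𝓗_α(x) = h_{α₁}(x₁)⋯h_{α_d}(x_d)`. -/
noncomputable def hermiteHd (d : ℕ) (α : Fin d → ℕ) (x : Fin d → ℝ) : ℝ :=
  ∏ j, hermiteh (α j) (x j)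

/-- The diagonal Hermite kernel `𝓗_{k,d}(x,x) = Σ_{|α|=k} 𝓗_α(x)²`. -/
noncomputable def hermiteKerDiag (d k : ℕ) (x : Fin d → ℝ) : ℝ :=
  ∑ α ∈ Finset.Nat.antidiagonalTuple d k, (hermiteHd d α x) ^ 2

/-!
With `u = √2 t` one has `h_n(t)² = π^(-1/2) e^(-t²) He_n(u)² / n!` for the probabilists' Hermite
polynomials `He_n`, so up to a Gaussian factor `𝓗_{k,d}(x,x)` is the `k`-th coefficient of
`∏ⱼ F(uⱼ)`, where by Mehler's formula
`F(u) = ∑ He_n(u)² / n! Xⁿ = (1 - X²)^(-1/2) exp (u² X / (1 + X))`.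
Hence `∏ⱼ F(uⱼ) = (1 - X²)^(-d/2) exp (|u|² X / (1 + X))`, and multiplying by `1 - X²` lowers `d`
by two. To stay with formal power series we never write the closed form: it is characterised,
among series with constant coefficient `1`, by the first-order ODE expressing its logarithmic
derivative, and for a single `F(u)` that ODE reduces coefficientwise to a quadratic identity
between consecutive Hermite polynomials.
-/

namespace Polynomial

theorem derivative_hermite_succ (n : ℕ) :
    derivative (hermite (n + 1)) = (n + 1 : ℤ[X]) * hermite n := by
  induction n with
  | zero => simp
  | succ n ih =>
    rw [hermite_succ (n + 1), derivative_sub, derivative_mul, derivative_X, ih, derivative_mul,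
      derivative_add, derivative_natCast, derivative_one]
    push_cast
    linear_combination -(n + 1 : ℤ[X]) * hermite_succ n

theorem hermite_succ_succ (n : ℕ) :
    hermite (n + 2) = X * hermite (n + 1) - (n + 1 : ℤ[X]) * hermite n := by
  rw [hermite_succ (n + 1), derivative_hermite_succ]

variable {A : Type*} [CommRing A] (u : A)

theorem aeval_hermite_succ_succ (n : ℕ) :
    aeval u (hermite (n + 2)) = u * aeval u (hermite (n + 1)) - (n + 1) * aeval u (hermite n) := by
  rw [hermite_succ_succ]; simp

/-- `(n + 2)!` times the coefficient of `X^(n+2)` in the ODE `MehlerODE 1 (u ^ 2)` for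
`∑ He_k(u)² / k! Xᵏ`. -/
theorem aeval_hermite_sq_recurrence (n : ℕ) :
    aeval u (hermite (n + 3)) ^ 2 + (n + 2 - u ^ 2) * aeval u (hermite (n + 2)) ^ 2
      = (n + 2) * ((n + 2 - u ^ 2) * aeval u (hermite (n + 1)) ^ 2
        + (n + 1) ^ 2 * aeval u (hermite n) ^ 2) := by
  have h₃ := aeval_hermite_succ_succ u (n + 1)
  have h₂ := aeval_hermite_succ_succ u n
  push_cast at h₃
  linear_combination (aeval u (hermite (n + 3)) + u * aeval u (hermite (n + 2))
      - (n + 2) * aeval u (hermite (n + 1))) * h₃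
    - (n + 2) * ((n + 1) * aeval u (hermite n) + u * aeval u (hermite (n + 1))
      - aeval u (hermite (n + 2))) * h₂

end Polynomial

namespace PowerSeries

theorem coeff_prod_eq_sum_antidiagonalTuple {R : Type*} [CommSemiring R] {d : ℕ}
    (f : Fin d → R⟦X⟧) (k : ℕ) :
    coeff k (∏ j, f j) = ∑ α ∈ Finset.Nat.antidiagonalTuple d k, ∏ j, coeff (α j) (f j) := by
  classical
  rw [coeff_prod, finsuppAntidiag, sum_map, ← piAntidiag_univ_fin_eq_antidiagonalTuple]
  exact sum_attach _ fun α : Fin d → ℕ => ∏ j, coeff (α j) (f j)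

variable {R : Type*} [CommRing R]

theorem coeff_X_mul_derivative (f : R⟦X⟧) (n : ℕ) :
    coeff n (X * d⁄dX R f) = n * coeff n f := by
  cases n with
  | zero => simp
  | succ n => rw [coeff_succ_X_mul, coeff_derivative, mul_comm, Nat.cast_succ]

theorem eq_zero_of_derivative_eq_mul [IsAddTorsionFree R] {g f : R⟦X⟧}
    (hf : d⁄dX R f = g * f) (h₀ : constantCoeff f = 0) : f = 0 := by
  ext n
  rw [map_zero]
  induction n using Nat.strong_induction_on with
  | _ n ih =>
    cases n with
    | zero => simpa using h₀
    | succ n =>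
      have hlow : coeff n (g * f) = 0 := by
        rw [coeff_mul]
        refine sum_eq_zero fun p hp => ?_
        rw [ih p.2 (by linarith [mem_antidiagonal.1 hp]), mul_zero]
      rw [← hf, coeff_derivative, mul_comm, ← Nat.cast_succ, ← nsmul_eq_mul] at hlow
      exact (nsmul_eq_zero_iff_right n.succ_ne_zero).1 hlow

/-- The ODE of `(1 - X²)^(-m/2) * exp (s * X / (1 + X))`, whose logarithmic derivative is
`(s + (m - s) X + m X²) / ((1 + X) (1 - X²))`. -/
def MehlerODE (m s : R) (f : R⟦X⟧) : Prop :=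
  (1 + X) * (1 - X ^ 2) * d⁄dX R f = (C s + C (m - s) * X + C m * X ^ 2) * f

namespace MehlerODE

variable {m m' s s' : R} {f g : R⟦X⟧}

theorem one : MehlerODE (0 : R) 0 1 := by
  simp [MehlerODE]

theorem mul (hf : MehlerODE m s f) (hg : MehlerODE m' s' g) :
    MehlerODE (m + m') (s + s') (f * g) := by
  unfold MehlerODE at *
  rw [Derivation.leibniz, smul_eq_mul, smul_eq_mul]
  simp only [map_add, map_sub] at hf hg ⊢
  linear_combination g * hf + f * hg

theorem prod {ι : Type*} (t : Finset ι) {m s : ι → R} {f : ι → R⟦X⟧}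
    (h : ∀ i ∈ t, MehlerODE (m i) (s i) (f i)) :
    MehlerODE (∑ i ∈ t, m i) (∑ i ∈ t, s i) (∏ i ∈ t, f i) := by
  classical
  induction t using Finset.induction_on with
  | empty => simpa using one
  | insert i t hi ih =>
    rw [sum_insert hi, sum_insert hi, prod_insert hi]
    exact (h i (mem_insert_self i t)).mul (ih fun j hj => h j (mem_insert_of_mem hj))

theorem one_sub_X_sq_mul (hf : MehlerODE (m + 2) s f) : MehlerODE m s ((1 - X ^ 2) * f) := by
  unfold MehlerODE at *
  have hd : d⁄dX R (1 - X ^ 2 : R⟦X⟧) = -(2 * X) := by simp [pow_two]; ring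
  rw [Derivation.leibniz, smul_eq_mul, smul_eq_mul, hd]
  simp only [map_add, map_sub, map_ofNat] at hf ⊢
  linear_combination (1 - X ^ 2) * hf

theorem eq_of_constantCoeff_eq [IsAddTorsionFree R] (hf : MehlerODE m s f)
    (hg : MehlerODE m s g) (h₀ : constantCoeff f = constantCoeff g) : f = g := by
  have hunit : IsUnit ((1 + X) * (1 - X ^ 2) : R⟦X⟧) :=
    isUnit_iff_constantCoeff.2 (by simp)
  obtain ⟨D, hD⟩ := hunit
  rw [← sub_eq_zero]
  refine eq_zero_of_derivative_eq_mul
    (g := (↑D⁻¹ : R⟦X⟧) * (C s + C (m - s) * X + C m * X ^ 2)) ?_ (by simp [h₀])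
  unfold MehlerODE at hf hg
  rw [map_sub, mul_assoc, mul_sub, ← hf, ← hg, ← hD, ← mul_sub, ← mul_assoc, Units.inv_mul,
    one_mul]

end MehlerODE

end PowerSeries

section HermiteSq

open PowerSeries Nat
open Polynomial (hermite)

variable {K : Type*} [Field K]

noncomputable def hermiteSqSeries (u : K) : K⟦X⟧ :=
  mk fun n => Polynomial.aeval u (hermite n) ^ 2 / n !

theorem constantCoeff_hermiteSqSeries (u : K) : constantCoeff (hermiteSqSeries u) = 1 := by
  rw [← coeff_zero_eq_constantCoeff_apply, hermiteSqSeries, coeff_mk]; simp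

theorem coeff_hermiteSqSeries (u : K) (n : ℕ) :
    coeff n (hermiteSqSeries u) = Polynomial.aeval u (hermite n) ^ 2 / n ! :=
  coeff_mk _ _

theorem mehlerODE_hermiteSqSeries [CharZero K] (u : K) :
    MehlerODE 1 (u ^ 2) (hermiteSqSeries u) := by
  unfold MehlerODE
  set f := hermiteSqSeries u
  have hD : (1 + X) * (1 - X ^ 2) * d⁄dX K f
      = d⁄dX K f + X * d⁄dX K f - X * (X * d⁄dX K f) - X * (X * (X * d⁄dX K f)) := by ring
  have hN : (C (u ^ 2) + C (1 - u ^ 2) * X + C 1 * X ^ 2) * f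
      = u ^ 2 • f + (1 - u ^ 2) • (X * f) + X * (X * f) := by
    simp only [smul_eq_C_mul, map_one]; ring
  rw [hD, hN]
  ext n
  simp only [map_add, map_sub, coeff_smul, coeff_derivative, coeff_X_mul_derivative,
    smul_eq_mul]
  match n with
  | 0 => simp [f, coeff_hermiteSqSeries]
  | 1 => simp [f, coeff_hermiteSqSeries]; ring
  | n + 2 =>
    simp only [coeff_succ_X_mul, coeff_X_mul_derivative, coeff_derivative, f,
      coeff_hermiteSqSeries]
    have h₂ : (n + 1 + 1 : K) ≠ 0 := by exact_mod_cast succ_ne_zero (n + 1)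
    have h₃ : (n + 2 + 1 : K) ≠ 0 := by exact_mod_cast succ_ne_zero (n + 2)
    have hn : (n ! : K) ≠ 0 := by exact_mod_cast factorial_ne_zero n
    push_cast [factorial_succ]
    field_simp
    linear_combination Polynomial.aeval_hermite_sq_recurrence u n

theorem mehlerODE_prod_hermiteSqSeries [CharZero K] {ι : Type*} [Fintype ι] (u : ι → K) :
    MehlerODE (Fintype.card ι : K) (∑ i, u i ^ 2) (∏ i, hermiteSqSeries (u i)) := by
  simpa using MehlerODE.prod univ fun i _ => mehlerODE_hermiteSqSeries (u i)

theorem one_sub_X_sq_mul_prod_hermiteSqSeries [CharZero K] {ι κ : Type*}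
    [Fintype ι] [Fintype κ]
    (hcard : Fintype.card ι = Fintype.card κ + 2) (u : ι → K) (v : κ → K)
    (huv : ∑ i, v i ^ 2 = ∑ i, u i ^ 2) :
    (1 - X ^ 2) * ∏ i, hermiteSqSeries (u i) = ∏ i, hermiteSqSeries (v i) := by
  have hu := mehlerODE_prod_hermiteSqSeries u
  rw [hcard, Nat.cast_add, Nat.cast_two] at hu
  refine hu.one_sub_X_sq_mul.eq_of_constantCoeff_eq (huv ▸ mehlerODE_prod_hermiteSqSeries v) ?_
  simp [constantCoeff_hermiteSqSeries]

end HermiteSq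

section Kernel

open Polynomial (aeval hermite)
open Nat

theorem hermiteH_eq_aeval_hermite (n : ℕ) (t : ℝ) :
    hermiteH n t = √2 ^ n * aeval (√2 * t) (hermite n) := by
  have hgauss : (fun s : ℝ => exp (-s ^ 2)) = fun s => exp (-((√2 * s) ^ 2 / 2)) := by
    funext s
    rw [mul_pow, sq_sqrt zero_le_two]
    ring_nf
  have hsmooth : ContDiff ℝ n fun y : ℝ => exp (-(y ^ 2 / 2)) := by fun_prop
  have hexp : exp (t ^ 2) * exp (-((√2 * t) ^ 2 / 2)) = 1 := by
    rw [← exp_add, mul_pow, sq_sqrt zero_le_two]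
    simp
  have hsign : (-1 : ℝ) ^ n * (-1) ^ n = 1 := by
    rw [← mul_pow]
    simp
  rw [hermiteH, hgauss, iteratedDeriv_comp_const_mul hsmooth, iteratedDeriv_eq_iterate]
  beta_reduce
  rw [Polynomial.deriv_gaussian_eq_hermite_mul_gaussian]
  linear_combination (√2 ^ n * aeval (√2 * t) (hermite n)) *
    (exp (t ^ 2) * exp (-((√2 * t) ^ 2 / 2)) * hsign + hexp)

theorem hermiteh_sq (n : ℕ) (t : ℝ) :
    hermiteh n t ^ 2 = (√π)⁻¹ * exp (-t ^ 2) * (aeval (√2 * t) (hermite n) ^ 2 / n !) := by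
  have hnorm : √(2 ^ n * n ! * √π) ^ 2 = 2 ^ n * n ! * √π := sq_sqrt (by positivity)
  have hsqrt2 : (√2 ^ n) ^ 2 = 2 ^ n := by rw [← pow_mul, pow_mul', sq_sqrt zero_le_two]
  have hexp : exp (-t ^ 2 / 2) ^ 2 = exp (-t ^ 2) := by rw [← exp_nat_mul]; ring_nf
  rw [hermiteh, hermiteH_eq_aeval_hermite]
  simp only [mul_pow, inv_pow, hnorm, hsqrt2, hexp]
  field_simp

theorem hermiteKerDiag_eq_coeff_prod_hermiteSqSeries (d k : ℕ) (x : Fin d → ℝ) :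
    hermiteKerDiag d k x = (√π ^ d)⁻¹ * exp (-∑ j, x j ^ 2) *
      PowerSeries.coeff k (∏ j, hermiteSqSeries (√2 * x j)) := by
  rw [hermiteKerDiag, PowerSeries.coeff_prod_eq_sum_antidiagonalTuple, mul_sum]
  refine sum_congr rfl fun α _ => ?_
  simp only [hermiteHd, ← prod_pow, hermiteh_sq, prod_mul_distrib, prod_const, Finset.card_fin,
    coeff_hermiteSqSeries, ← exp_sum, sum_neg_distrib, inv_pow]

end Kernel

/-- Dimension reduction identity for diagonal Hermite kernels:
`𝓗_{k,d}(x,x) - 𝓗_{k-2,d}(x,x) = π⁻¹ 𝓗_{k,d-2}(x',x')` whenever `|x'| = |x|`. -/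
theorem hermiteKerDiag_dimension_reduction (k d : ℕ) (hk : 2 ≤ k) (hd : 3 ≤ d)
    (x : Fin d → ℝ) (x' : Fin (d - 2) → ℝ)
    (hxx : ∑ i, (x' i) ^ 2 = ∑ i, (x i) ^ 2) :
    hermiteKerDiag d k x - hermiteKerDiag d (k - 2) x
      = Real.pi⁻¹ * hermiteKerDiag (d - 2) k x' := by
  obtain ⟨m, rfl⟩ : ∃ m, k = m + 2 := ⟨k - 2, by omega⟩
  have hscaled : ∑ i, (√2 * x' i) ^ 2 = ∑ i, (√2 * x i) ^ 2 := by
    simp only [mul_pow, ← mul_sum, hxx]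
  have hseries := congrArg (PowerSeries.coeff (m + 2))
    (one_sub_X_sq_mul_prod_hermiteSqSeries (by simp; omega) _ _ hscaled)
  rw [sub_mul, one_mul, map_sub, PowerSeries.coeff_X_pow_mul] at hseries
  have hpi : √π ^ d = π * √π ^ (d - 2) :=
    calc √π ^ d = √π ^ 2 * √π ^ (d - 2) := by rw [← pow_add]; congr 1; omega
      _ = π * √π ^ (d - 2) := by rw [sq_sqrt pi_nonneg]
  rw [Nat.add_sub_cancel, hermiteKerDiag_eq_coeff_prod_hermiteSqSeries,
    hermiteKerDiag_eq_coeff_prod_hermiteSqSeries, hermiteKerDiag_eq_coeff_prod_hermiteSqSeries,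
    hxx, ← hseries, hpi, mul_inv]
  ring
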